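/- arXiv:1404.5003 — 3 statements merged into one kernel-verified Lean document; each statement's English description precedes it below -/
import Mathlib

section
/- After multiplying by (z)_k, the identity ∑_{j=0}^{k} (-k)_j (k+y)_j / (j! (z)_j) · (z)_k = (z−y−k)_k holds as an identity of polynomials in the variable z, for all nonnegative integers k and y. Here (z)_k / (z)_j = (z+j)(z+j+1)···(z+k−1) is a polynomial in z for j ≤ k. -/
open Finset Polynomial

/-
The coefficient `(-k)_j / j!` is `(-1)^j * C(k, j)`, so the claim is the
Chu–Vandermonde identity `∑_{i+m=k} C(k,i) (-1)^i (c)_i (z+i)_m = (z-c)_k` at `c = k + y`.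
That identity holds over any commutative ring, by induction on `k`: Pascal's rule splits
the sum at rank `k+1` into two sums at rank `k`, whose terms pair up as
`(z+i) - (c+i) = z - c` times the terms of the rank-`k` sum at `z + 1`.
-/

theorem ascPochhammer_succ_eval_left {S : Type*} [CommSemiring S] (n : ℕ) (t : S) :
    (ascPochhammer S (n + 1)).eval t = t * (ascPochhammer S n).eval (t + 1) := by
  rw [ascPochhammer_succ_left, eval_mul, eval_X, eval_comp, eval_add, eval_X, eval_one]

theorem ascPochhammer_eval_neg_natCast {R : Type*} [Ring R] (k j : ℕ) :
    (ascPochhammer R j).eval (-(k : R)) = (-1) ^ j * k.descFactorial j := by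
  rw [ascPochhammer_eval_neg_eq_descPochhammer, descPochhammer_eval_eq_descFactorial]

theorem sum_antidiagonal_choose_mul_ascPochhammer_eval {R : Type*} [CommRing R] (c : R) (k : ℕ)
    (z : R) :
    ∑ ij ∈ antidiagonal k, (k.choose ij.1 : R) *
        ((-1) ^ ij.1 * (ascPochhammer R ij.1).eval c * (ascPochhammer R ij.2).eval (z + ij.1)) =
      (ascPochhammer R k).eval (z - c) := by
  induction k generalizing z with
  | zero => simp
  | succ k ih =>
    rw [sum_antidiagonal_choose_succ_mul
        (fun i m => (-1) ^ i * (ascPochhammer R i).eval c * (ascPochhammer R m).eval (z + i)),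
      ← sum_add_distrib, ascPochhammer_succ_eval_left, sub_add_eq_add_sub, ← ih, mul_sum]
    refine sum_congr rfl fun ij hij => ?_
    rw [Nat.choose_symm_of_eq_add (mem_antidiagonal.mp hij).symm, ascPochhammer_succ_eval_left,
      ascPochhammer_succ_eval]
    push_cast
    -- `ring_nf` also normalizes the evaluation points `z + (i + 1)` and `z + 1 + i`
    ring_nf

/-- The Gauss identity multiplied through by `(z)_k`, as a polynomial identity in `z`:
`∑_{j=0}^{k} ((-k)_j (k+y)_j / j!) · (z+j)_{k−j} = (z−y−k)_k`. -/
theorem gauss_2F1_poly (k y : ℕ) :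
    ∑ j ∈ Finset.range (k + 1),
        Polynomial.C (((ascPochhammer ℚ j).eval (-(k : ℚ)) *
            (ascPochhammer ℚ j).eval ((k : ℚ) + (y : ℚ))) / (j.factorial : ℚ)) *
          ((ascPochhammer ℚ (k - j)).comp (Polynomial.X + Polynomial.C (j : ℚ))) =
      (ascPochhammer ℚ k).comp (Polynomial.X - Polynomial.C ((y : ℚ) + (k : ℚ))) := by
  refine Polynomial.funext fun z => ?_
  have coeff_eq (j : ℕ) : (ascPochhammer ℚ j).eval (-(k : ℚ)) / j.factorial =
      k.choose j * (-1) ^ j := by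
    rw [ascPochhammer_eval_neg_natCast, Nat.descFactorial_eq_factorial_mul_choose]
    field_simp
    push_cast
    ring_nf
  simp only [eval_finsetSum, eval_mul, eval_C, eval_comp, eval_add, eval_sub, eval_X]
  rw [add_comm (y : ℚ), ← sum_antidiagonal_choose_mul_ascPochhammer_eval,
    Nat.sum_antidiagonal_eq_sum_range_succ (fun i m => (k.choose i : ℚ) * ((-1) ^ i *
      (ascPochhammer ℚ i).eval ((k : ℚ) + y) * (ascPochhammer ℚ m).eval (z + i)))]
  refine sum_congr rfl fun j _ => ?_
  rw [mul_div_right_comm, coeff_eq]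
  ring
end

section
/- The two product expressions for the MacMahon number are equal: for all nonnegative integers a, b, c, ∏_{i=1}^{a} ∏_{j=1}^{b} ∏_{k=1}^{c} (i+j+k−1)/(i+j+k−2) = [∏_{k=0}^{a−1} k! ∏_{k=0}^{b−1} k! ∏_{k=0}^{c−1} k! ∏_{k=0}^{a+b+c−1} k!] / [∏_{k=0}^{b+c−1} k! ∏_{k=0}^{a+c−1} k! ∏_{k=0}^{a+b−1} k!]. -/
/-!
Shifting all indices to start at `0`, the factor `(i + j + k + 2) / (i + j + k + 1)` is a ratio of
consecutive values of `k ↦ i + j + k + 1`, so the product over `k` telescopes to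
`(i + j + c + 1) / (i + j + 1)`. The products of numerators and of denominators over `j` are
ascending factorials, i.e. ratios of factorials, and the product over `i` of each of these
factorials is a ratio of two products `∏ k < n, k !`.
-/

open Finset Nat

theorem prod_Icc_one_eq_prod_range {M : Type*} [CommMonoid M] (f : ℕ → M) (n : ℕ) :
    ∏ i ∈ Icc 1 n, f i = ∏ i ∈ range n, f (i + 1) := by
  rw [← Ico_add_one_right_eq_Icc, prod_Ico_eq_prod_range, Nat.add_sub_cancel]
  simp only [add_comm 1]

theorem prod_range_div_of_ne_zero {G₀ : Type*} [CommGroupWithZero G₀] (f : ℕ → G₀)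
    (hf : ∀ i, f i ≠ 0) (n : ℕ) : ∏ i ∈ range n, f (i + 1) / f i = f n / f 0 := by
  induction n with
  | zero => rw [prod_range_zero, div_self (hf 0)]
  | succ n ih => rw [prod_range_succ, ih, mul_comm, div_mul_div_cancel₀ (hf n)]

section CharZero

variable {K : Type*} [Field K] [CharZero K]

theorem prod_range_succ_add_cast_eq_factorial_div (n b : ℕ) :
    ∏ j ∈ range b, ((n + 1 + j : ℕ) : K) = (n + b)! / n ! := by
  rw [← Nat.cast_prod, ← ascFactorial_eq_prod_range, ← factorial_mul_ascFactorial n b,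
    Nat.cast_mul, mul_div_cancel_left₀ _ (Nat.cast_ne_zero.2 (factorial_ne_zero n))]

theorem prod_range_factorial_add_eq_div (n a : ℕ) :
    ∏ i ∈ range a, ((n + i)! : K) =
      (∏ k ∈ range (n + a), (k ! : K)) / ∏ k ∈ range n, (k ! : K) := by
  rw [prod_range_add,
    mul_div_cancel_left₀ _ (prod_ne_zero_iff.2 fun k _ => Nat.cast_ne_zero.2 (factorial_ne_zero k))]

theorem prod_range_macmahon_factor (i j c : ℕ) :
    ∏ k ∈ range c, (((i + 1 : ℕ) : K) + (j + 1 : ℕ) + (k + 1 : ℕ) - 1) /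
        (((i + 1 : ℕ) : K) + (j + 1 : ℕ) + (k + 1 : ℕ) - 2) =
      ((i + c + 1 + j : ℕ) : K) / (i + 1 + j : ℕ) := by
  have h := prod_range_div_of_ne_zero (fun k => ((i + j + 1 + k : ℕ) : K))
    (fun k => Nat.cast_ne_zero.2 (by omega)) c
  convert h using 2 with k
  · push_cast
    congr 1 <;> ring
  · push_cast
    ring
  · push_cast
    ring

theorem prod_range_macmahon_row (i b c : ℕ) :
    ∏ j ∈ range b, ((i + c + 1 + j : ℕ) : K) / (i + 1 + j : ℕ) =
      ((b + c + i)! / (c + i)! : K) / ((b + i)! / i !) := by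
  rw [prod_div_distrib, prod_range_succ_add_cast_eq_factorial_div,
    prod_range_succ_add_cast_eq_factorial_div]
  ring_nf

end CharZero

/-- The two product expressions for the MacMahon number agree. -/
theorem macmahon_two_products_eq (a b c : ℕ) :
    ∏ i ∈ Finset.Icc 1 a, ∏ j ∈ Finset.Icc 1 b, ∏ k ∈ Finset.Icc 1 c,
        (((i : ℚ) + j + k - 1) / ((i : ℚ) + j + k - 2)) =
      ((∏ k ∈ Finset.range a, (k.factorial : ℚ)) * (∏ k ∈ Finset.range b, (k.factorial : ℚ)) *
          (∏ k ∈ Finset.range c, (k.factorial : ℚ)) *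
          ∏ k ∈ Finset.range (a + b + c), (k.factorial : ℚ)) /
        ((∏ k ∈ Finset.range (b + c), (k.factorial : ℚ)) *
          (∏ k ∈ Finset.range (a + c), (k.factorial : ℚ)) *
          ∏ k ∈ Finset.range (a + b), (k.factorial : ℚ)) := by
  simp only [prod_Icc_one_eq_prod_range, prod_range_macmahon_factor, prod_range_macmahon_row]
  rw [prod_div_distrib, prod_div_distrib, prod_div_distrib, prod_range_factorial_add_eq_div,
    prod_range_factorial_add_eq_div, prod_range_factorial_add_eq_div,
    add_comm (b + c), add_comm c, add_comm b a, ← add_assoc]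
  have hF : ∀ n, ∏ k ∈ range n, (k ! : ℚ) ≠ 0 := fun n =>
    prod_ne_zero_iff.2 fun k _ => Nat.cast_ne_zero.2 (factorial_ne_zero k)
  field_simp [hF]
end

section
/- (Gelfand–Tsetlin / Cohn–Larsen–Propp count as a Vandermonde-type product.) For integers 1 ≤ x_1 < x_2 < ... < x_n ≤ m+n, the quantity ∏_{1 ≤ i < j ≤ n} (x_j − x_i)/(j − i) is a positive integer. -/
/-!
Up to the constant `∏_{i<j} (j - i) = sf (n-1)`, the product is the Vandermonde determinant of
the `xᵢ`. It is positive because `x` is increasing, and it is divisible by `sf (n-1)` because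
replacing the powers `X^j` by the falling factorials `j! · X.choose j` (column operations)
turns it into `sf (n-1) · det (xᵢ.choose j)`; this is `Matrix.superFactorial_dvd_vandermonde_det`.
-/

open Finset

theorem Finset.prod_filter_fst_lt_snd {ι M : Type*} [Fintype ι] [LinearOrder ι]
    [LocallyFiniteOrderTop ι] [CommMonoid M] (f : ι → ι → M) :
    ∏ p ∈ univ.filter (fun p : ι × ι => p.1 < p.2), f p.1 p.2 = ∏ i, ∏ j ∈ Ioi i, f i j := by
  rw [prod_filter, ← univ_product_univ, prod_product]
  refine prod_congr rfl fun i _ => ?_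
  rw [← prod_filter, filter_lt_eq_Ioi]

theorem Nat.superFactorial_pos : ∀ k : ℕ, 0 < k.superFactorial
  | 0 => Nat.one_pos
  | k + 1 => Nat.mul_pos (Nat.factorial_pos _) (Nat.superFactorial_pos k)

namespace Matrix

theorem det_vandermonde_pos_of_strictMono {R : Type*} [CommRing R] [PartialOrder R]
    [IsStrictOrderedRing R] {n : ℕ} {v : Fin n → R} (hv : StrictMono v) :
    0 < (vandermonde v).det := by
  rw [det_vandermonde]
  exact prod_pos fun i _ => prod_pos fun j hj => sub_pos.mpr (hv (mem_Ioi.mp hj))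

theorem prod_sub_div_sub_eq_det_vandermonde_div_superFactorial {k : ℕ} (v : Fin (k + 1) → ℤ) :
    ∏ p ∈ univ.filter (fun p : Fin (k + 1) × Fin (k + 1) => p.1 < p.2),
        (((v p.2 : ℚ) - (v p.1 : ℚ)) / (((p.2 : ℕ) : ℚ) - ((p.1 : ℕ) : ℚ)))
      = ((vandermonde v).det : ℚ) / k.superFactorial := by
  rw [prod_div_distrib, prod_filter_fst_lt_snd (fun i j => (v j : ℚ) - v i),
    prod_filter_fst_lt_snd (fun i j : Fin (k + 1) => ((j : ℕ) : ℚ) - ((i : ℕ) : ℚ)),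
    det_vandermonde, ← det_vandermonde_id_eq_superFactorial (R := ℚ), det_vandermonde]
  push_cast
  rfl

end Matrix

theorem gelfand_tsetlin_count_pos_int_general (n : ℕ) (x : Fin n → ℤ)
    (hmono : StrictMono x) :
    ∃ N : ℕ, 0 < N ∧
      (∏ p ∈ Finset.univ.filter (fun p : Fin n × Fin n => p.1 < p.2),
          (((x p.2 : ℚ) - (x p.1 : ℚ)) / (((p.2 : ℕ) : ℚ) - ((p.1 : ℕ) : ℚ)))) = (N : ℚ) := by
  rcases n with _ | k
  · exact ⟨1, one_pos, by simp⟩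
  obtain ⟨c, hc⟩ := Matrix.superFactorial_dvd_vandermonde_det x
  have hsf : (0 : ℤ) < k.superFactorial := by exact_mod_cast Nat.superFactorial_pos k
  have hc_pos : 0 < c :=
    pos_of_mul_pos_right (hc ▸ Matrix.det_vandermonde_pos_of_strictMono hmono) hsf.le
  refine ⟨c.toNat, by omega, ?_⟩
  rw [Matrix.prod_sub_div_sub_eq_det_vandermonde_div_superFactorial, hc, Int.cast_mul,
    Int.cast_natCast, mul_div_cancel_left₀ _ (by exact_mod_cast hsf.ne')]
  exact_mod_cast (Int.toNat_of_nonneg hc_pos.le).symm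

/-- Gelfand–Tsetlin / Cohn–Larsen–Propp: for integers `1 ≤ x₁ < ⋯ < xₙ ≤ m+n`, the
Vandermonde-type product `∏_{i<j} (xⱼ−xᵢ)/(j−i)` is a positive integer. -/
theorem gelfand_tsetlin_count_pos_int (m n : ℕ) (x : Fin n → ℤ)
    (hmono : StrictMono x) (h1 : ∀ i, 1 ≤ x i) (h2 : ∀ i, x i ≤ (m : ℤ) + n) :
    ∃ N : ℕ, 0 < N ∧
      (∏ p ∈ Finset.univ.filter (fun p : Fin n × Fin n => p.1 < p.2),
          (((x p.2 : ℚ) - (x p.1 : ℚ)) / (((p.2 : ℕ) : ℚ) - ((p.1 : ℕ) : ℚ)))) = (N : ℚ) :=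
  gelfand_tsetlin_count_pos_int_general n x hmono
end
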